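/- arXiv:1710.03910 — 2 statements merged into one kernel-verified Lean document; each statement's English description precedes it below -/
import Mathlib

section
/- For every n ≥ 3, the star chromatic number of the splitting graph S(C_n) is at most 5. -/
open SimpleGraph

/-- The cycle graph on `n` vertices, with vertex set `ZMod n` and edges `{i, i+1}`. -/
def zmodCycleGraph (n : ℕ) : SimpleGraph (ZMod n) where
  Adj i j := i ≠ j ∧ (j = i + 1 ∨ i = j + 1)
  symm := by constructor; intro i j h; exact ⟨h.1.symm, h.2.symm⟩
  loopless := by constructor; intro i h; exact h.1 rfl

/-- The splitting graph of the cycle `C_n`: vertices `inl i` are the cycle vertices `v_i`,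
vertices `inr i` are the added vertices `v_i'`, with `v_i'` adjacent to `v_{i-1}` and `v_{i+1}`. -/
def splitCycle (n : ℕ) : SimpleGraph (ZMod n ⊕ ZMod n) where
  Adj u v :=
    match u, v with
    | .inl i, .inl j => i ≠ j ∧ (j = i + 1 ∨ i = j + 1)
    | .inl i, .inr j => i = j + 1 ∨ j = i + 1
    | .inr i, .inl j => j = i + 1 ∨ i = j + 1
    | .inr _, .inr _ => False
  symm := by
    constructor
    rintro (i | i) (j | j) h
    · exact ⟨h.1.symm, h.2.symm⟩
    · exact h
    · exact h
    · exact h.elim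
  loopless := by
    constructor
    rintro (i | i) h
    · exact h.1 rfl
    · exact h

/-- A star coloring: a proper vertex coloring such that no path on 4 vertices is 2-colored. -/
def IsStarColoring {V α : Type*} (G : SimpleGraph V) (c : V → α) : Prop :=
  (∀ u v, G.Adj u v → c u ≠ c v) ∧
  ∀ w x y z, G.Adj w x → G.Adj x y → G.Adj y z → w ≠ y → x ≠ z → w ≠ z →
    ¬(c w = c y ∧ c x = c z)

/-- The star chromatic number: the least `k` admitting a star coloring with `k` colors. -/
noncomputable def starChromaticNumber {V : Type*} (G : SimpleGraph V) : ℕ :=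
  sInf {k | ∃ c : V → Fin k, IsStarColoring G c}

/-! ### Auxiliary material for the proof -/

instance (n : ℕ) : DecidableRel (splitCycle n).Adj := fun u v =>
  match u, v with
  | .inl i, .inl j => inferInstanceAs (Decidable (i ≠ j ∧ (j = i + 1 ∨ i = j + 1)))
  | .inl i, .inr j => inferInstanceAs (Decidable (i = j + 1 ∨ j = i + 1))
  | .inr i, .inl j => inferInstanceAs (Decidable (j = i + 1 ∨ i = j + 1))
  | .inr _, .inr _ => inferInstanceAs (Decidable False)

/-- A pattern of colors `{0,1,2,3}` around the cycle such that any three consecutive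
vertices get pairwise distinct colors (valid for `n ≥ 3`, `n ≠ 5`). -/
def pat (n x : ℕ) : ℕ :=
  if n % 3 = 0 then x % 3
  else if n % 3 = 1 then (if x < n - 4 then x % 3 else x - (n - 4))
  else (if x < n - 8 then x % 3 else (x - (n - 8)) % 4)

lemma pat_lt (n x : ℕ) (hn : 3 ≤ n) (hx : x < n) : pat n x < 4 := by
  unfold pat; split_ifs <;> omega

lemma pat_step (n x : ℕ) (hn : 3 ≤ n) (h5 : n ≠ 5) (hx : x < n) :
    pat n x ≠ pat n ((x + 1) % n) := by
  have h : (x + 1) % n = x + 1 ∨ (x + 1) % n = 0 ∧ x + 1 = n := by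
    rcases Nat.lt_or_ge (x + 1) n with h | h
    · exact Or.inl (Nat.mod_eq_of_lt h)
    · right; have : x + 1 = n := by omega
      simp [this]
  rcases h with h | ⟨h, h'⟩ <;> rw [h] <;> unfold pat <;> split_ifs <;> omega

lemma pat_step2 (n x : ℕ) (hn : 3 ≤ n) (h5 : n ≠ 5) (hx : x < n) :
    pat n x ≠ pat n ((x + 2) % n) := by
  have h : (x + 2) % n = x + 2 ∨ ((x + 2) % n = 0 ∧ x + 2 = n)
      ∨ ((x + 2) % n = 1 ∧ x + 1 = n) := by
    rcases Nat.lt_or_ge (x + 2) n with h | h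
    · exact Or.inl (Nat.mod_eq_of_lt h)
    · rcases Nat.lt_or_ge (x + 1) n with h2 | h2
      · right; left
        have hx2 : x + 2 = n := by omega
        simp [hx2]
      · right; right
        have hx1 : x + 1 = n := by omega
        constructor
        · have : x + 2 = n + 1 := by omega
          rw [this, Nat.add_mod_left]
          exact Nat.mod_eq_of_lt (by omega)
        · exact hx1
  rcases h with h | ⟨h, h'⟩ | ⟨h, h'⟩ <;> rw [h] <;> unfold pat <;> split_ifs <;> omega

/-- If the cycle vertices are colored so that any three consecutive vertices get pairwise
distinct colors, all different from `4`, and all split vertices are colored `4`, then we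
get a star coloring of the split cycle. -/
lemma star_aux (n : ℕ) (f : ZMod n → Fin 5)
    (H1 : ∀ i : ZMod n, f i ≠ f (i + 1))
    (H2 : ∀ i : ZMod n, f i ≠ f (i + 2))
    (H3 : ∀ i : ZMod n, f i ≠ 4) :
    IsStarColoring (splitCycle n) (Sum.elim f (fun _ => (4 : Fin 5))) := by
  have key : ∀ b a d : ZMod n, (a = b + 1 ∨ b = a + 1) → (d = b + 1 ∨ b = d + 1) →
      a ≠ d → f a ≠ f d := by
    rintro b a d (h1 | h1) (h2 | h2) had
    · exact absurd (h1.trans h2.symm) had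
    · have ha : a = d + 2 := by rw [h1, h2]; ring
      rw [ha]; exact (H2 d).symm
    · have hd : d = a + 2 := by rw [h2, h1]; ring
      rw [hd]; exact H2 a
    · exact absurd (add_right_cancel (h1.symm.trans h2)) had
  constructor
  · rintro (a | a) (b | b) h
    · rcases h.2 with rfl | rfl
      · exact H1 a
      · exact (H1 b).symm
    · exact fun hc => H3 a hc
    · exact fun hc => H3 b hc.symm
    · exact h.elim
  · rintro (a | a) (b | b) (d | d) (e | e) h1 h2 h3 hwy hxz hwz ⟨hc1, hc2⟩ <;>
      first
      | exact h1
      | exact h2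
      | exact h3
      | exact H3 a hc1
      | exact H3 d hc1.symm
      | exact key b a d h1.2.symm h2.2 (fun h => hwy (congrArg _ h)) hc1
      | exact key b a d h1 h2.2 (fun h => hwy (congrArg _ h)) hc1
      | exact key b a d h1.2.symm h2 (fun h => hwy (congrArg _ h)) hc1
      | exact key b a d h1 h2 (fun h => hwy (congrArg _ h)) hc1
      | exact key d b e h2 h3 (fun h => hxz (congrArg _ h)) hc2

theorem stmt_5 (n : ℕ) (hn : 3 ≤ n) :
    starChromaticNumber (splitCycle n) ≤ 5 := by
  apply Nat.sInf_le
  by_cases h5 : n = 5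
  · subst h5
    exact ⟨Sum.elim (fun i : ZMod 5 => (⟨i.val, ZMod.val_lt i⟩ : Fin 5))
        (fun i : ZMod 5 => (⟨(i.val + 2) % 5, Nat.mod_lt _ (by norm_num)⟩ : Fin 5)),
      by decide, by decide⟩
  · haveI : NeZero n := ⟨by omega⟩
    haveI : Fact (1 < n) := ⟨by omega⟩
    refine ⟨Sum.elim (fun i : ZMod n =>
        (⟨pat n i.val, lt_trans (pat_lt n i.val hn (ZMod.val_lt i)) (by norm_num)⟩ : Fin 5))
        (fun _ => 4), star_aux n _ ?_ ?_ ?_⟩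
    · intro i h
      have hv : (i + 1).val = (i.val + 1) % n := by rw [ZMod.val_add, ZMod.val_one]
      exact pat_step n i.val hn h5 (ZMod.val_lt i)
        (by rw [← hv]; exact congrArg Fin.val h)
    · intro i h
      have h2v : ((2 : ZMod n)).val = 2 := by
        have h2c : ((2 : ℕ) : ZMod n) = 2 := by push_cast; ring
        rw [← h2c, ZMod.val_natCast, Nat.mod_eq_of_lt (by omega)]
      have hv : (i + 2).val = (i.val + 2) % n := by rw [ZMod.val_add, h2v]
      exact pat_step2 n i.val hn h5 (ZMod.val_lt i)
        (by rw [← hv]; exact congrArg Fin.val h)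
    · intro i h
      have h4 := pat_lt n i.val hn (ZMod.val_lt i)
      have hc : pat n i.val = ((4 : Fin 5) : ℕ) := congrArg Fin.val h
      have : ((4 : Fin 5) : ℕ) = 4 := rfl
      omega
end

section
/- If n ≡ 1 (mod 3) and n ≥ 10, then the star chromatic number of the splitting graph S(C_n) equals 4. -/
open SimpleGraph

/-! ### Auxiliary material -/

section AuxDefs

/-- index of a vertex of the splitting graph -/
def sval {n : ℕ} : ZMod n ⊕ ZMod n → ℕ := Sum.elim ZMod.val ZMod.val

@[simp] lemma sval_inl {n : ℕ} (i : ZMod n) : sval (Sum.inl i) = i.val := rfl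
@[simp] lemma sval_inr {n : ℕ} (i : ZMod n) : sval (Sum.inr i) = i.val := rfl

lemma val_step {n : ℕ} [NeZero n] (h2 : 1 < n) {i j : ZMod n} (h : j = i + 1) :
    (j.val = i.val + 1 ∧ i.val + 1 < n) ∨ (i.val = n - 1 ∧ j.val = 0) := by
  have hv : j.val = (i.val + 1) % n := by
    subst h
    rw [ZMod.val_add, ZMod.val_one_eq_one_mod, Nat.mod_eq_of_lt h2]
  have hi := ZMod.val_lt i
  rcases Nat.lt_or_ge (i.val + 1) n with h' | h'
  · exact Or.inl ⟨by rw [hv, Nat.mod_eq_of_lt h'], h'⟩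
  · have hh : i.val + 1 = n := by omega
    exact Or.inr ⟨by omega, by rw [hv, hh, Nat.mod_self]⟩

lemma adj_val {n : ℕ} [NeZero n] (h2 : 1 < n) {u v : ZMod n ⊕ ZMod n}
    (h : (splitCycle n).Adj u v) :
    ((sval v = sval u + 1 ∧ sval u + 1 < n) ∨ (sval u = n - 1 ∧ sval v = 0)) ∨
    ((sval u = sval v + 1 ∧ sval v + 1 < n) ∨ (sval v = n - 1 ∧ sval u = 0)) := by
  rcases u with i | i <;> rcases v with j | j
  · have h' : i ≠ j ∧ (j = i + 1 ∨ i = j + 1) := h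
    rcases h'.2 with h'' | h''
    · exact Or.inl (val_step h2 h'')
    · exact Or.inr (val_step h2 h'')
  · have h' : i = j + 1 ∨ j = i + 1 := h
    rcases h' with h'' | h''
    · exact Or.inr (val_step h2 h'')
    · exact Or.inl (val_step h2 h'')
  · have h' : j = i + 1 ∨ i = j + 1 := h
    rcases h' with h'' | h''
    · exact Or.inl (val_step h2 h'')
    · exact Or.inr (val_step h2 h'')
  · exact (h : False).elim

lemma zmod_eq_iff_val_eq {n : ℕ} [NeZero n] (i j : ZMod n) : i = j ↔ i.val = j.val :=
  ⟨fun h => h ▸ rfl, fun h => ZMod.val_injective n h⟩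

/-- the color of cycle vertex `x` -/
def aF (n x : ℕ) : ℕ :=
  if x = n - 4 then 3 else if x = n - 3 then 0 else if x = n - 1 then 3 else x % 3

/-- the color of added vertex `x` -/
def bF (n x : ℕ) : ℕ :=
  if x = n - 5 then 0
  else if x = n - 4 ∨ x = n - 3 ∨ x = n - 2 ∨ x = n - 1 then 1
  else if x = 0 then 2 else 3

lemma aF_lt (n x : ℕ) : aF n x < 4 := by unfold aF; split_ifs <;> omega

lemma bF_lt (n x : ℕ) : bF n x < 4 := by unfold bF; split_ifs <;> omega

lemma aF_spec (n x : ℕ) :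
    (x = n - 4 ∧ aF n x = 3) ∨ (x ≠ n - 4 ∧ x = n - 3 ∧ aF n x = 0) ∨
    (x ≠ n - 4 ∧ x ≠ n - 3 ∧ x = n - 1 ∧ aF n x = 3) ∨
    (x ≠ n - 4 ∧ x ≠ n - 3 ∧ x ≠ n - 1 ∧ aF n x = x % 3) := by
  unfold aF; split_ifs <;> omega

lemma bF_spec (n x : ℕ) :
    (x = n - 5 ∧ bF n x = 0) ∨
    (x ≠ n - 5 ∧ (x = n - 4 ∨ x = n - 3 ∨ x = n - 2 ∨ x = n - 1) ∧ bF n x = 1) ∨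
    (x ≠ n - 5 ∧ ¬(x = n - 4 ∨ x = n - 3 ∨ x = n - 2 ∨ x = n - 1) ∧ x = 0 ∧ bF n x = 2) ∨
    (x ≠ n - 5 ∧ ¬(x = n - 4 ∨ x = n - 3 ∨ x = n - 2 ∨ x = n - 1) ∧ x ≠ 0 ∧ bF n x = 3) := by
  unfold bF; split_ifs <;> omega

/-- the explicit star 4-coloring -/
def cF (n : ℕ) : ZMod n ⊕ ZMod n → Fin 4 :=
  Sum.elim (fun i => ⟨aF n i.val, aF_lt n _⟩) (fun i => ⟨bF n i.val, bF_lt n _⟩)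

section Core

variable {n x1 x2 x3 x4 : ℕ}

set_option maxHeartbeats 2000000 in
lemma core_llll (h1 : n % 3 = 1) (hn : 10 ≤ n)
    (l1 : x1 < n) (l2 : x2 < n) (l3 : x3 < n) (l4 : x4 < n)
    (d1 : ((x2 = x1 + 1 ∧ x1 + 1 < n) ∨ (x1 = n - 1 ∧ x2 = 0)) ∨
      ((x1 = x2 + 1 ∧ x2 + 1 < n) ∨ (x2 = n - 1 ∧ x1 = 0)))
    (d2 : ((x3 = x2 + 1 ∧ x2 + 1 < n) ∨ (x2 = n - 1 ∧ x3 = 0)) ∨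
      ((x2 = x3 + 1 ∧ x3 + 1 < n) ∨ (x3 = n - 1 ∧ x2 = 0)))
    (d3 : ((x4 = x3 + 1 ∧ x3 + 1 < n) ∨ (x3 = n - 1 ∧ x4 = 0)) ∨
      ((x3 = x4 + 1 ∧ x4 + 1 < n) ∨ (x4 = n - 1 ∧ x3 = 0)))
    (ne13 : x1 ≠ x3) (ne24 : x2 ≠ x4) :
    ¬(aF n x1 = aF n x3 ∧ aF n x2 = aF n x4) := by
  have s1 := aF_spec n x1
  have s2 := aF_spec n x2
  have s3 := aF_spec n x3
  have s4 := aF_spec n x4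
  rcases d1 with (⟨e1, f1⟩ | ⟨e1, f1⟩) | (⟨e1, f1⟩ | ⟨e1, f1⟩) <;>
    rcases d2 with (⟨e2, f2⟩ | ⟨e2, f2⟩) | (⟨e2, f2⟩ | ⟨e2, f2⟩) <;>
    rcases d3 with (⟨e3, f3⟩ | ⟨e3, f3⟩) | (⟨e3, f3⟩ | ⟨e3, f3⟩) <;>
    omega

set_option maxHeartbeats 2000000 in
lemma core_rlll (h1 : n % 3 = 1) (hn : 10 ≤ n)
    (l1 : x1 < n) (l2 : x2 < n) (l3 : x3 < n) (l4 : x4 < n)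
    (d1 : ((x2 = x1 + 1 ∧ x1 + 1 < n) ∨ (x1 = n - 1 ∧ x2 = 0)) ∨
      ((x1 = x2 + 1 ∧ x2 + 1 < n) ∨ (x2 = n - 1 ∧ x1 = 0)))
    (d2 : ((x3 = x2 + 1 ∧ x2 + 1 < n) ∨ (x2 = n - 1 ∧ x3 = 0)) ∨
      ((x2 = x3 + 1 ∧ x3 + 1 < n) ∨ (x3 = n - 1 ∧ x2 = 0)))
    (d3 : ((x4 = x3 + 1 ∧ x3 + 1 < n) ∨ (x3 = n - 1 ∧ x4 = 0)) ∨
      ((x3 = x4 + 1 ∧ x4 + 1 < n) ∨ (x4 = n - 1 ∧ x3 = 0)))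
    (ne24 : x2 ≠ x4) :
    ¬(bF n x1 = aF n x3 ∧ aF n x2 = aF n x4) := by
  have s1 := bF_spec n x1
  have s2 := aF_spec n x2
  have s3 := aF_spec n x3
  have s4 := aF_spec n x4
  rcases d1 with (⟨e1, f1⟩ | ⟨e1, f1⟩) | (⟨e1, f1⟩ | ⟨e1, f1⟩) <;>
    rcases d2 with (⟨e2, f2⟩ | ⟨e2, f2⟩) | (⟨e2, f2⟩ | ⟨e2, f2⟩) <;>
    rcases d3 with (⟨e3, f3⟩ | ⟨e3, f3⟩) | (⟨e3, f3⟩ | ⟨e3, f3⟩) <;>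
    omega

set_option maxHeartbeats 2000000 in
lemma core_lrll (h1 : n % 3 = 1) (hn : 10 ≤ n)
    (l1 : x1 < n) (l2 : x2 < n) (l3 : x3 < n) (l4 : x4 < n)
    (d1 : ((x2 = x1 + 1 ∧ x1 + 1 < n) ∨ (x1 = n - 1 ∧ x2 = 0)) ∨
      ((x1 = x2 + 1 ∧ x2 + 1 < n) ∨ (x2 = n - 1 ∧ x1 = 0)))
    (d2 : ((x3 = x2 + 1 ∧ x2 + 1 < n) ∨ (x2 = n - 1 ∧ x3 = 0)) ∨
      ((x2 = x3 + 1 ∧ x3 + 1 < n) ∨ (x3 = n - 1 ∧ x2 = 0)))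
    (d3 : ((x4 = x3 + 1 ∧ x3 + 1 < n) ∨ (x3 = n - 1 ∧ x4 = 0)) ∨
      ((x3 = x4 + 1 ∧ x4 + 1 < n) ∨ (x4 = n - 1 ∧ x3 = 0)))
    (ne13 : x1 ≠ x3) :
    ¬(aF n x1 = aF n x3 ∧ bF n x2 = aF n x4) := by
  have s1 := aF_spec n x1
  have s2 := bF_spec n x2
  have s3 := aF_spec n x3
  have s4 := aF_spec n x4
  rcases d1 with (⟨e1, f1⟩ | ⟨e1, f1⟩) | (⟨e1, f1⟩ | ⟨e1, f1⟩) <;>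
    rcases d2 with (⟨e2, f2⟩ | ⟨e2, f2⟩) | (⟨e2, f2⟩ | ⟨e2, f2⟩) <;>
    rcases d3 with (⟨e3, f3⟩ | ⟨e3, f3⟩) | (⟨e3, f3⟩ | ⟨e3, f3⟩) <;>
    omega

set_option maxHeartbeats 2000000 in
lemma core_rlrl (h1 : n % 3 = 1) (hn : 10 ≤ n)
    (l1 : x1 < n) (l2 : x2 < n) (l3 : x3 < n) (l4 : x4 < n)
    (d1 : ((x2 = x1 + 1 ∧ x1 + 1 < n) ∨ (x1 = n - 1 ∧ x2 = 0)) ∨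
      ((x1 = x2 + 1 ∧ x2 + 1 < n) ∨ (x2 = n - 1 ∧ x1 = 0)))
    (d2 : ((x3 = x2 + 1 ∧ x2 + 1 < n) ∨ (x2 = n - 1 ∧ x3 = 0)) ∨
      ((x2 = x3 + 1 ∧ x3 + 1 < n) ∨ (x3 = n - 1 ∧ x2 = 0)))
    (d3 : ((x4 = x3 + 1 ∧ x3 + 1 < n) ∨ (x3 = n - 1 ∧ x4 = 0)) ∨
      ((x3 = x4 + 1 ∧ x4 + 1 < n) ∨ (x4 = n - 1 ∧ x3 = 0)))
    (ne13 : x1 ≠ x3) (ne24 : x2 ≠ x4) :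
    ¬(bF n x1 = bF n x3 ∧ aF n x2 = aF n x4) := by
  have s1 := bF_spec n x1
  have s2 := aF_spec n x2
  have s3 := bF_spec n x3
  have s4 := aF_spec n x4
  rcases d1 with (⟨e1, f1⟩ | ⟨e1, f1⟩) | (⟨e1, f1⟩ | ⟨e1, f1⟩) <;>
    rcases d2 with (⟨e2, f2⟩ | ⟨e2, f2⟩) | (⟨e2, f2⟩ | ⟨e2, f2⟩) <;>
    rcases d3 with (⟨e3, f3⟩ | ⟨e3, f3⟩) | (⟨e3, f3⟩ | ⟨e3, f3⟩) <;>
    omega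

set_option maxHeartbeats 2000000 in
lemma core_rllr (h1 : n % 3 = 1) (hn : 10 ≤ n)
    (l1 : x1 < n) (l2 : x2 < n) (l3 : x3 < n) (l4 : x4 < n)
    (d1 : ((x2 = x1 + 1 ∧ x1 + 1 < n) ∨ (x1 = n - 1 ∧ x2 = 0)) ∨
      ((x1 = x2 + 1 ∧ x2 + 1 < n) ∨ (x2 = n - 1 ∧ x1 = 0)))
    (d2 : ((x3 = x2 + 1 ∧ x2 + 1 < n) ∨ (x2 = n - 1 ∧ x3 = 0)) ∨
      ((x2 = x3 + 1 ∧ x3 + 1 < n) ∨ (x3 = n - 1 ∧ x2 = 0)))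
    (d3 : ((x4 = x3 + 1 ∧ x3 + 1 < n) ∨ (x3 = n - 1 ∧ x4 = 0)) ∨
      ((x3 = x4 + 1 ∧ x4 + 1 < n) ∨ (x4 = n - 1 ∧ x3 = 0)))
    (ne14 : x1 ≠ x4) :
    ¬(bF n x1 = aF n x3 ∧ aF n x2 = bF n x4) := by
  have s1 := bF_spec n x1
  have s2 := aF_spec n x2
  have s3 := aF_spec n x3
  have s4 := bF_spec n x4
  rcases d1 with (⟨e1, f1⟩ | ⟨e1, f1⟩) | (⟨e1, f1⟩ | ⟨e1, f1⟩) <;>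
    rcases d2 with (⟨e2, f2⟩ | ⟨e2, f2⟩) | (⟨e2, f2⟩ | ⟨e2, f2⟩) <;>
    rcases d3 with (⟨e3, f3⟩ | ⟨e3, f3⟩) | (⟨e3, f3⟩ | ⟨e3, f3⟩) <;>
    omega

lemma core_lllr (h1 : n % 3 = 1) (hn : 10 ≤ n)
    (l1 : x1 < n) (l2 : x2 < n) (l3 : x3 < n) (l4 : x4 < n)
    (d1 : ((x2 = x1 + 1 ∧ x1 + 1 < n) ∨ (x1 = n - 1 ∧ x2 = 0)) ∨
      ((x1 = x2 + 1 ∧ x2 + 1 < n) ∨ (x2 = n - 1 ∧ x1 = 0)))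
    (d2 : ((x3 = x2 + 1 ∧ x2 + 1 < n) ∨ (x2 = n - 1 ∧ x3 = 0)) ∨
      ((x2 = x3 + 1 ∧ x3 + 1 < n) ∨ (x3 = n - 1 ∧ x2 = 0)))
    (d3 : ((x4 = x3 + 1 ∧ x3 + 1 < n) ∨ (x3 = n - 1 ∧ x4 = 0)) ∨
      ((x3 = x4 + 1 ∧ x4 + 1 < n) ∨ (x4 = n - 1 ∧ x3 = 0)))
    (ne13 : x1 ≠ x3) :
    ¬(aF n x1 = aF n x3 ∧ aF n x2 = bF n x4) :=
  fun h => core_rlll h1 hn l4 l3 l2 l1 d3.symm d2.symm d1.symm ne13.symm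
    ⟨h.2.symm, h.1.symm⟩

lemma core_llrl (h1 : n % 3 = 1) (hn : 10 ≤ n)
    (l1 : x1 < n) (l2 : x2 < n) (l3 : x3 < n) (l4 : x4 < n)
    (d1 : ((x2 = x1 + 1 ∧ x1 + 1 < n) ∨ (x1 = n - 1 ∧ x2 = 0)) ∨
      ((x1 = x2 + 1 ∧ x2 + 1 < n) ∨ (x2 = n - 1 ∧ x1 = 0)))
    (d2 : ((x3 = x2 + 1 ∧ x2 + 1 < n) ∨ (x2 = n - 1 ∧ x3 = 0)) ∨
      ((x2 = x3 + 1 ∧ x3 + 1 < n) ∨ (x3 = n - 1 ∧ x2 = 0)))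
    (d3 : ((x4 = x3 + 1 ∧ x3 + 1 < n) ∨ (x3 = n - 1 ∧ x4 = 0)) ∨
      ((x3 = x4 + 1 ∧ x4 + 1 < n) ∨ (x4 = n - 1 ∧ x3 = 0)))
    (ne24 : x2 ≠ x4) :
    ¬(aF n x1 = bF n x3 ∧ aF n x2 = aF n x4) :=
  fun h => core_lrll h1 hn l4 l3 l2 l1 d3.symm d2.symm d1.symm ne24.symm
    ⟨h.2.symm, h.1.symm⟩

lemma core_lrlr (h1 : n % 3 = 1) (hn : 10 ≤ n)
    (l1 : x1 < n) (l2 : x2 < n) (l3 : x3 < n) (l4 : x4 < n)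
    (d1 : ((x2 = x1 + 1 ∧ x1 + 1 < n) ∨ (x1 = n - 1 ∧ x2 = 0)) ∨
      ((x1 = x2 + 1 ∧ x2 + 1 < n) ∨ (x2 = n - 1 ∧ x1 = 0)))
    (d2 : ((x3 = x2 + 1 ∧ x2 + 1 < n) ∨ (x2 = n - 1 ∧ x3 = 0)) ∨
      ((x2 = x3 + 1 ∧ x3 + 1 < n) ∨ (x3 = n - 1 ∧ x2 = 0)))
    (d3 : ((x4 = x3 + 1 ∧ x3 + 1 < n) ∨ (x3 = n - 1 ∧ x4 = 0)) ∨
      ((x3 = x4 + 1 ∧ x4 + 1 < n) ∨ (x4 = n - 1 ∧ x3 = 0)))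
    (ne13 : x1 ≠ x3) (ne24 : x2 ≠ x4) :
    ¬(aF n x1 = aF n x3 ∧ bF n x2 = bF n x4) :=
  fun h => core_rlrl h1 hn l4 l3 l2 l1 d3.symm d2.symm d1.symm ne24.symm ne13.symm
    ⟨h.2.symm, h.1.symm⟩

end Core

set_option maxHeartbeats 1000000 in
lemma cF_star (n : ℕ) (h1 : n % 3 = 1) (hn : 10 ≤ n) :
    IsStarColoring (splitCycle n) (cF n) := by
  haveI : NeZero n := ⟨by omega⟩
  have h2 : 1 < n := by omega
  constructor
  · intro u v huv
    have d := adj_val h2 huv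
    rcases u with i | i <;> rcases v with j | j
    · simp only [sval_inl] at d
      simp only [cF, Sum.elim_inl, ne_eq, Fin.mk.injEq]
      have si := aF_spec n i.val
      have sj := aF_spec n j.val
      have li := ZMod.val_lt i
      have lj := ZMod.val_lt j
      omega
    · simp only [sval_inl, sval_inr] at d
      simp only [cF, Sum.elim_inl, Sum.elim_inr, ne_eq, Fin.mk.injEq]
      have si := aF_spec n i.val
      have sj := bF_spec n j.val
      have li := ZMod.val_lt i
      have lj := ZMod.val_lt j
      omega
    · simp only [sval_inl, sval_inr] at d
      simp only [cF, Sum.elim_inl, Sum.elim_inr, ne_eq, Fin.mk.injEq]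
      have si := bF_spec n i.val
      have sj := aF_spec n j.val
      have li := ZMod.val_lt i
      have lj := ZMod.val_lt j
      omega
    · exact (huv : False).elim
  · intro w x y z hwx hxy hyz hwy hxz hwz
    have d1 := adj_val h2 hwx
    have d2 := adj_val h2 hxy
    have d3 := adj_val h2 hyz
    rcases w with i1 | i1 <;> rcases x with i2 | i2 <;> rcases y with i3 | i3 <;>
        rcases z with i4 | i4 <;>
      simp only [sval_inl, sval_inr] at d1 d2 d3 <;>
      (try simp only [ne_eq, Sum.inl.injEq, Sum.inr.injEq, zmod_eq_iff_val_eq] at hwy) <;>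
      (try simp only [ne_eq, Sum.inl.injEq, Sum.inr.injEq, zmod_eq_iff_val_eq] at hxz) <;>
      (try simp only [ne_eq, Sum.inl.injEq, Sum.inr.injEq, zmod_eq_iff_val_eq] at hwz) <;>
      simp only [cF, Sum.elim_inl, Sum.elim_inr, Fin.mk.injEq]
    -- llll
    · exact core_llll h1 hn (ZMod.val_lt i1) (ZMod.val_lt i2) (ZMod.val_lt i3)
        (ZMod.val_lt i4) d1 d2 d3 hwy hxz
    -- lllr
    · exact core_lllr h1 hn (ZMod.val_lt i1) (ZMod.val_lt i2) (ZMod.val_lt i3)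
        (ZMod.val_lt i4) d1 d2 d3 hwy
    -- llrl
    · exact core_llrl h1 hn (ZMod.val_lt i1) (ZMod.val_lt i2) (ZMod.val_lt i3)
        (ZMod.val_lt i4) d1 d2 d3 hxz
    -- llrr
    · exact (hyz : False).elim
    -- lrll
    · exact core_lrll h1 hn (ZMod.val_lt i1) (ZMod.val_lt i2) (ZMod.val_lt i3)
        (ZMod.val_lt i4) d1 d2 d3 hwy
    -- lrlr
    · exact core_lrlr h1 hn (ZMod.val_lt i1) (ZMod.val_lt i2) (ZMod.val_lt i3)
        (ZMod.val_lt i4) d1 d2 d3 hwy hxz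
    -- lrrl
    · exact (hxy : False).elim
    -- lrrr
    · exact (hxy : False).elim
    -- rlll
    · exact core_rlll h1 hn (ZMod.val_lt i1) (ZMod.val_lt i2) (ZMod.val_lt i3)
        (ZMod.val_lt i4) d1 d2 d3 hxz
    -- rllr
    · exact core_rllr h1 hn (ZMod.val_lt i1) (ZMod.val_lt i2) (ZMod.val_lt i3)
        (ZMod.val_lt i4) d1 d2 d3 hwz
    -- rlrl
    · exact core_rlrl h1 hn (ZMod.val_lt i1) (ZMod.val_lt i2) (ZMod.val_lt i3)
        (ZMod.val_lt i4) d1 d2 d3 hwy hxz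
    -- rlrr
    · exact (hyz : False).elim
    -- rrll
    · exact (hwx : False).elim
    -- rrlr
    · exact (hwx : False).elim
    -- rrrl
    · exact (hwx : False).elim
    -- rrrr
    · exact (hwx : False).elim

lemma fin3_pigeon1 : ∀ p q r s : Fin 3, q ≠ p → q ≠ r → s ≠ p → s ≠ r → p ≠ r → q = s := by
  decide

lemma fin3_pigeon2 : ∀ p q r s : Fin 3,
    p ≠ q → q ≠ r → p ≠ r → p ≠ s → q ≠ s → r = s := by decide

lemma no3 (n : ℕ) (h1 : n % 3 = 1) (hn : 10 ≤ n) (c : ZMod n ⊕ ZMod n → Fin 3)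
    (hc : IsStarColoring (splitCycle n) c) : False := by
  haveI : NeZero n := ⟨by omega⟩
  have h2 : 1 < n := by omega
  -- nonvanishing of small constants in `ZMod n`
  have hksmall : ∀ k : ℕ, 0 < k → k < n → (k : ZMod n) ≠ 0 := by
    intro k hk hkn h
    have : (k : ZMod n).val = k := ZMod.val_natCast_of_lt hkn
    rw [h] at this
    simp [ZMod.val_zero] at this
    omega
  have h10 : (1 : ZMod n) ≠ 0 := by
    have := hksmall 1 (by omega) (by omega); simpa using this
  have h20 : (2 : ZMod n) ≠ 0 := by
    have := hksmall 2 (by omega) (by omega); simpa using this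
  have h30 : (3 : ZMod n) ≠ 0 := by
    have := hksmall 3 (by omega) (by omega); simpa using this
  have hself : ∀ (i k : ZMod n), k ≠ 0 → i ≠ i + k := by
    intro i k hk h
    exact hk (left_eq_add.mp h)
  -- adjacency constructors
  have adjLL : ∀ i j : ZMod n, j = i + 1 → (splitCycle n).Adj (.inl i) (.inl j) := by
    intro i j h
    exact ⟨h ▸ hself i 1 h10, Or.inl h⟩
  have adjLL' : ∀ i j : ZMod n, i = j + 1 → (splitCycle n).Adj (.inl i) (.inl j) := by
    intro i j h
    exact ⟨h ▸ (hself j 1 h10).symm, Or.inr h⟩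
  have adjRL : ∀ i j : ZMod n, j = i + 1 → (splitCycle n).Adj (.inr i) (.inl j) :=
    fun i j h => Or.inl h
  have adjRL' : ∀ i j : ZMod n, i = j + 1 → (splitCycle n).Adj (.inr i) (.inl j) :=
    fun i j h => Or.inr h
  have adjLR : ∀ i j : ZMod n, i = j + 1 → (splitCycle n).Adj (.inl i) (.inr j) :=
    fun i j h => Or.inl h
  have adjLR' : ∀ i j : ZMod n, j = i + 1 → (splitCycle n).Adj (.inl i) (.inr j) :=
    fun i j h => Or.inr h
  have neLL : ∀ i j : ZMod n, i ≠ j → (Sum.inl i : ZMod n ⊕ ZMod n) ≠ Sum.inl j :=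
    fun i j h hh => h (Sum.inl.inj hh)
  have neRR : ∀ i j : ZMod n, i ≠ j → (Sum.inr i : ZMod n ⊕ ZMod n) ≠ Sum.inr j :=
    fun i j h hh => h (Sum.inr.inj hh)
  -- basic facts about the coloring
  have F1 : ∀ i j : ZMod n, j = i + 1 → c (.inl i) ≠ c (.inl j) :=
    fun i j h => hc.1 _ _ (adjLL i j h)
  have F2a : ∀ i j : ZMod n, j = i + 1 → c (.inl i) ≠ c (.inr j) :=
    fun i j h => hc.1 _ _ (adjLR' i j h)
  have F2b : ∀ i j : ZMod n, j = i + 1 → c (.inl j) ≠ c (.inr i) :=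
    fun i j h => hc.1 _ _ (adjLR j i h)
  have F3 : ∀ i p q r : ZMod n, p = i + 1 → q = i + 2 → r = i + 3 →
      ¬(c (.inl i) = c (.inl q) ∧ c (.inl p) = c (.inl r)) := by
    intro i p q r hp hq hr
    refine hc.2 (.inl i) (.inl p) (.inl q) (.inl r) (adjLL i p hp)
      (adjLL p q (by rw [hp, hq]; ring)) (adjLL q r (by rw [hq, hr]; ring))
      (neLL i q (hq ▸ hself i 2 h20)) (neLL p r ?_) (neLL i r (hr ▸ hself i 3 h30))
    rw [hp, hr]
    intro hh
    exact hself (i + 1) 2 h20 (hh.trans (by ring))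
  have F4 : ∀ i p : ZMod n, p = i + 1 →
      ¬(c (.inr i) = c (.inl i) ∧ c (.inl p) = c (.inr p)) := by
    intro i p hp
    exact hc.2 (.inr i) (.inl p) (.inl i) (.inr p) (adjRL i p hp) (adjLL' p i hp)
      (adjLR' i p hp) Sum.inr_ne_inl Sum.inl_ne_inr (neRR i p (hp ▸ hself i 1 h10))
  have F7 : ∀ i p q : ZMod n, p = i + 1 → q = i + 2 →
      ¬(c (.inr i) = c (.inl q) ∧ c (.inl p) = c (.inr p)) := by
    intro i p q hp hq
    exact hc.2 (.inr i) (.inl p) (.inl q) (.inr p) (adjRL i p hp)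
      (adjLL p q (by rw [hp, hq]; ring)) (adjLR q p (by rw [hp, hq]; ring))
      Sum.inr_ne_inl Sum.inl_ne_inr (neRR i p (hp ▸ hself i 1 h10))
  have F9 : ∀ i p q r : ZMod n, p = i + 1 → q = i + 2 → r = i + 3 →
      ¬(c (.inr i) = c (.inl q) ∧ c (.inl p) = c (.inr r)) := by
    intro i p q r hp hq hr
    exact hc.2 (.inr i) (.inl p) (.inl q) (.inr r) (adjRL i p hp)
      (adjLL p q (by rw [hp, hq]; ring)) (adjLR' q r (by rw [hq, hr]; ring))
      Sum.inr_ne_inl Sum.inl_ne_inr (neRR i r (hr ▸ hself i 3 h30))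
  -- pigeonhole: forced equality on the added vertices
  have F5 : ∀ i p q : ZMod n, p = i + 1 → q = i + 2 →
      c (.inl i) ≠ c (.inl q) → c (.inl p) = c (.inr p) := by
    intro i p q hp hq hne
    refine fin3_pigeon1 (c (.inl i)) (c (.inl p)) (c (.inl q)) (c (.inr p))
      (F1 i p hp).symm (F1 p q (by rw [hp, hq]; ring)) (F2a i p hp).symm
      ?_ hne
    exact (F2b p q (by rw [hp, hq]; ring)).symm
  -- alternation
  have hQor : ∀ i p q r : ZMod n, p = i + 1 → q = i + 2 → r = i + 3 →
      c (.inl i) = c (.inl q) ∨ c (.inl p) = c (.inl r) := by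
    intro i p q r hp hq hr
    by_contra hcon
    push_neg at hcon
    have e1 : c (.inl p) = c (.inr p) := F5 i p q hp hq hcon.1
    have e2 : c (.inl q) = c (.inr q) := F5 p q r (by rw [hp, hq]; ring)
      (by rw [hp, hr]; ring) hcon.2
    exact F4 p q (by rw [hp, hq]; ring) ⟨e1.symm, e2⟩
  -- the main contradiction, starting from any index with `a i = a (i+2)`
  have main : ∀ i q0 : ZMod n, q0 = i + 2 → c (.inl i) = c (.inl q0) → False := by
    intro i q0 hq0 hQ0'
    subst hq0
    have hQ0 : c (.inl i) = c (.inl (i + 2)) := hQ0'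
    have hnQ1 : c (.inl (i + 1)) ≠ c (.inl (i + 3)) :=
      fun h => F3 i (i + 1) (i + 2) (i + 3) rfl rfl rfl ⟨hQ0, h⟩
    have hQ2 : c (.inl (i + 2)) = c (.inl (i + 4)) :=
      ((hQor (i + 1) (i + 2) (i + 3) (i + 4) (by ring) (by ring)
        (by ring)).resolve_left hnQ1)
    have hnQ3 : c (.inl (i + 3)) ≠ c (.inl (i + 5)) :=
      fun h => F3 (i + 2) (i + 3) (i + 4) (i + 5) (by ring) (by ring) (by ring) ⟨hQ2, h⟩
    have hQ4 : c (.inl (i + 4)) = c (.inl (i + 6)) :=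
      ((hQor (i + 3) (i + 4) (i + 5) (i + 6) (by ring) (by ring)
        (by ring)).resolve_left hnQ3)
    have hb2 : c (.inl (i + 2)) = c (.inr (i + 2)) :=
      F5 (i + 1) (i + 2) (i + 3) (by ring) (by ring) hnQ1
    have hb4 : c (.inl (i + 4)) = c (.inr (i + 4)) :=
      F5 (i + 3) (i + 4) (i + 5) (by ring) (by ring) hnQ3
    have k1 : c (.inl (i + 3)) ≠ c (.inr (i + 5)) := by
      intro h
      exact F9 (i + 2) (i + 3) (i + 4) (i + 5) (by ring) (by ring) (by ring)
        ⟨hb2.symm.trans hQ2, h⟩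
    have k2 : c (.inl (i + 5)) ≠ c (.inr (i + 5)) := by
      intro h
      exact F7 (i + 4) (i + 5) (i + 6) (by ring) (by ring)
        ⟨(hb4.symm.trans hQ4), h⟩
    have k3 : c (.inl (i + 4)) ≠ c (.inr (i + 5)) := F2a (i + 4) (i + 5) (by ring)
    have d34 : c (.inl (i + 3)) ≠ c (.inl (i + 4)) := F1 (i + 3) (i + 4) (by ring)
    have d45 : c (.inl (i + 4)) ≠ c (.inl (i + 5)) := F1 (i + 4) (i + 5) (by ring)
    exact k2 (fin3_pigeon2 (c (.inl (i + 3))) (c (.inl (i + 4))) (c (.inl (i + 5)))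
      (c (.inr (i + 5))) d34 d45 hnQ3 k1 k3)
  rcases hQor 0 1 2 3 (by ring) (by ring) (by ring) with h | h
  · exact main 0 2 (by ring) h
  · exact main 1 3 (by ring) h

end AuxDefs

theorem stmt_6 (n : ℕ) (h1 : n % 3 = 1) (hn : 10 ≤ n) :
    starChromaticNumber (splitCycle n) = 4 := by
  have hub : (4 : ℕ) ∈ {k | ∃ c : ZMod n ⊕ ZMod n → Fin k,
      IsStarColoring (splitCycle n) c} := ⟨cF n, cF_star n h1 hn⟩
  apply le_antisymm
  · exact Nat.sInf_le hub
  · apply le_csInf ⟨4, hub⟩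
    rintro k ⟨c, hc⟩
    by_contra hlt
    push_neg at hlt
    have hk3 : k ≤ 3 := by omega
    set c' : ZMod n ⊕ ZMod n → Fin 3 := fun v => Fin.castLE hk3 (c v) with hc'def
    have hc' : IsStarColoring (splitCycle n) c' := by
      constructor
      · intro u v h hh
        exact hc.1 u v h (Fin.castLE_injective hk3 hh)
      · rintro w x y z e1 e2 e3 d1 d2 d3 ⟨q1, q2⟩
        exact hc.2 w x y z e1 e2 e3 d1 d2 d3
          ⟨Fin.castLE_injective hk3 q1, Fin.castLE_injective hk3 q2⟩
    exact (no3 n h1 hn c' hc').elim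
end
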